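/- With F as above satisfying F^t = −F and [F₁, F₂} = P₁₂F₂ − F₂P₁₂ + F₂Q₁₂ − Q₁₂F₂, the following intertwining relations hold: P₁₂F₂ = F₁P₁₂, Q₁₂F₂ = −Q₁₂F₁, and F₁Q₁₂ = −F₂Q₁₂. -/

import Mathlib

/-- The ℤ₂-grading: `[a] = 0` for `a ≤ M`, `[a] = 1` for `a > M` (0-indexed),
with `N = 2n`. -/
def gr (M N : ℕ) (a : Fin (M + N)) : ℕ := if (a : ℕ) < M then 0 else 1

/-- The index involution `ā`: `ā = M+1-a` for `a ≤ M`, `ā = 2M+N+1-a` for `a > M`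
(written 0-indexed). -/
def bar (M N : ℕ) (a : Fin (M + N)) : Fin (M + N) :=
  if h : (a : ℕ) < M then ⟨M - 1 - (a : ℕ), by omega⟩
  else ⟨2 * M + N - 1 - (a : ℕ), by have := a.isLt; omega⟩

/-- Super-transposition `E_{ab}^t = (-1)^{[a]([b]+1)} θ_a θ_b E_{b̄ā}`, extended to
matrices with entries in a superalgebra `A`. -/
noncomputable def stranspA (M N : ℕ) {A : Type*} [Ring A] [Algebra ℂ A]
    (θ : Fin (M + N) → ℂ) (F : Matrix (Fin (M + N)) (Fin (M + N)) A) :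
    Matrix (Fin (M + N)) (Fin (M + N)) A :=
  fun p q =>
    ((-1 : ℂ) ^ (gr M N (bar M N q) * (gr M N (bar M N p) + 1))
        * θ (bar M N q) * θ (bar M N p)) • F (bar M N q) (bar M N p)

/-- The graded permutation operator `P₁₂` as a matrix over `A`. -/
noncomputable def PmatA (M N : ℕ) (A : Type*) [Ring A] [Algebra ℂ A] :
    Matrix (Fin (M + N) × Fin (M + N)) (Fin (M + N) × Fin (M + N)) A :=
  fun p q => if p.1 = q.2 ∧ p.2 = q.1
    then ((-1 : ℂ) ^ (gr M N q.1 * gr M N q.2)) • (1 : A) else 0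

/-- The matrix `Q₁₂ = P₁₂^{t₁}` (partial super-transposition in the first factor,
with the Koszul sign of the graded tensor product taken into account). -/
noncomputable def QmatA (M N : ℕ) (A : Type*) [Ring A] [Algebra ℂ A]
    (θ : Fin (M + N) → ℂ) :
    Matrix (Fin (M + N) × Fin (M + N)) (Fin (M + N) × Fin (M + N)) A :=
  fun p q =>
    ((-1 : ℂ) ^ (gr M N (bar M N q.1) * (gr M N (bar M N p.1) + 1))
        * θ (bar M N q.1) * θ (bar M N p.1)
        * (-1 : ℂ) ^ ((gr M N p.2 + gr M N q.2)
            * (gr M N (bar M N q.1) + gr M N (bar M N p.1))))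
      • PmatA M N A (bar M N q.1, p.2) (bar M N p.1, q.2)

/-- `F₁ = F ⊗ I` on the graded tensor square. -/
def emb1 (M N : ℕ) {A : Type*} [Ring A]
    (F : Matrix (Fin (M + N)) (Fin (M + N)) A) :
    Matrix (Fin (M + N) × Fin (M + N)) (Fin (M + N) × Fin (M + N)) A :=
  fun p q => if p.2 = q.2 then F p.1 q.1 else 0

/-- `F₂ = I ⊗ F` on the graded tensor square (with the Koszul sign for an even
matrix `F` with homogeneous entries). -/
noncomputable def emb2 (M N : ℕ) {A : Type*} [Ring A] [Algebra ℂ A]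
    (F : Matrix (Fin (M + N)) (Fin (M + N)) A) :
    Matrix (Fin (M + N) × Fin (M + N)) (Fin (M + N) × Fin (M + N)) A :=
  fun p q => if p.1 = q.1
    then ((-1 : ℂ) ^ ((gr M N p.2 + gr M N q.2) * gr M N q.1)) • F p.2 q.2 else 0

/-!
`Q₁₂` has rank one: it is the outer product `qCol ⊗ qRow` of the two vectors supported on the
pairs `(a, ā)`. Hence `Q₁₂ X` and `X Q₁₂` only see the vectors `qRow X` and `X qCol`, and the two
relations involving `Q₁₂` become identities between such vectors. Entrywise these are the relation
`F^t = -F`, read through `θ_a² = 1` and the constancy of `(-1)^[a] θ_a θ_ā`. The relation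
`P₁₂ F₂ = F₁ P₁₂` is the defining property of the graded flip and holds for every `F`.
-/

open Matrix

lemma neg_one_pow_add_mul_self {R : Type*} [Monoid R] [HasDistribNeg R] (m n : ℕ) :
    (-1 : R) ^ ((m + n) * m) = (-1) ^ (m * (n + 1)) :=
  neg_one_pow_congr (by simp only [Nat.even_add, Nat.even_mul, Nat.even_add_one]; tauto)

lemma neg_one_pow_sq {R : Type*} [Monoid R] [HasDistribNeg R] (n : ℕ) :
    ((-1 : R) ^ n) ^ 2 = 1 := by
  rw [← pow_mul, pow_mul', neg_one_sq, one_pow]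

section Bar
variable {M N : ℕ}

lemma val_bar (a : Fin (M + N)) :
    (bar M N a : ℕ) = if (a : ℕ) < M then M - 1 - a else 2 * M + N - 1 - a := by
  unfold bar; split_ifs <;> rfl

@[simp] lemma gr_bar (a : Fin (M + N)) : gr M N (bar M N a) = gr M N a := by
  have := a.isLt; unfold gr; rw [val_bar]; split_ifs <;> omega

@[simp] lemma bar_bar (a : Fin (M + N)) : bar M N (bar M N a) = a := by
  have := a.isLt; ext; rw [val_bar, val_bar]; split_ifs <;> omega

lemma eq_bar_iff (a b : Fin (M + N)) : a = bar M N b ↔ b = bar M N a := by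
  constructor <;> rintro rfl <;> simp

end Bar

noncomputable def qCol (M N : ℕ) (A : Type*) [Ring A] [Algebra ℂ A] (θ : Fin (M + N) → ℂ) :
    Fin (M + N) × Fin (M + N) → A :=
  fun p => if p.2 = bar M N p.1 then ((-1 : ℂ) ^ gr M N p.1 * θ (bar M N p.1)) • 1 else 0

noncomputable def qRow (M N : ℕ) (A : Type*) [Ring A] [Algebra ℂ A] (θ : Fin (M + N) → ℂ) :
    Fin (M + N) × Fin (M + N) → A :=
  fun p => if p.2 = bar M N p.1 then θ (bar M N p.1) • 1 else 0

section Products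
variable {M N : ℕ} {A : Type*} [Ring A] [Algebra ℂ A]

local notation "V" => Fin (M + N) × Fin (M + N)

lemma PmatA_mul_apply (X : Matrix V V A) (p q : V) :
    (PmatA M N A * X) p q = ((-1 : ℂ) ^ (gr M N p.1 * gr M N p.2)) • X (p.2, p.1) q := by
  rw [mul_apply, Fintype.sum_eq_single (p.2, p.1)]
  · simp [PmatA, Nat.mul_comm]
  · rintro r hr
    simp [PmatA, show ¬(p.1 = r.2 ∧ p.2 = r.1) from fun h => hr (Prod.ext h.2.symm h.1.symm)]

lemma mul_PmatA_apply (X : Matrix V V A) (p q : V) :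
    (X * PmatA M N A) p q = ((-1 : ℂ) ^ (gr M N q.1 * gr M N q.2)) • X p (q.2, q.1) := by
  rw [mul_apply, Fintype.sum_eq_single (q.2, q.1)]
  · simp [PmatA]
  · rintro r hr
    simp [PmatA, show ¬(r.1 = q.2 ∧ r.2 = q.1) from fun h => hr (Prod.ext h.1 h.2)]

lemma QmatA_eq_vecMulVec (θ : Fin (M + N) → ℂ) :
    QmatA M N A θ = vecMulVec (qCol M N A θ) (qRow M N A θ) := by
  ext ⟨a, b⟩ ⟨c, d⟩
  simp only [QmatA, PmatA, qCol, qRow, vecMulVec_apply]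
  by_cases hb : b = bar M N a <;> by_cases hd : d = bar M N c
  · subst hb hd
    simp only [gr_bar, and_self, if_true, smul_smul, smul_mul_smul_comm, mul_one]
    congr 1
    have hsign : (-1 : ℂ) ^ (gr M N c * (gr M N a + 1))
        * (-1) ^ ((gr M N a + gr M N c) * (gr M N c + gr M N a)) * (-1) ^ (gr M N a * gr M N c)
        = (-1) ^ gr M N a := by
      simp only [← pow_add]
      exact neg_one_pow_congr (by simp only [Nat.even_add, Nat.even_mul, Nat.even_add_one]; tauto)
    linear_combination θ (bar M N c) * θ (bar M N a) * hsign
  all_goals simp [hb, hd, eq_comm (a := bar M N _)]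

variable (θ : Fin (M + N) → ℂ) (F : Matrix (Fin (M + N)) (Fin (M + N)) A)

lemma qRow_vecMul_emb1_apply (q : V) :
    (qRow M N A θ ᵥ* emb1 M N F) q = θ q.2 • F (bar M N q.2) q.1 := by
  rw [vecMul, dotProduct, Fintype.sum_eq_single (bar M N q.2, q.2)]
  · simp [qRow, emb1]
  · rintro ⟨a, b⟩ hr
    by_cases hb : b = q.2
    · subst hb
      simp [qRow, ← eq_bar_iff, show a ≠ bar M N q.2 from fun h => hr (by rw [h])]
    · simp [emb1, hb]

lemma qRow_vecMul_emb2_apply (q : V) :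
    (qRow M N A θ ᵥ* emb2 M N F) q =
      ((-1) ^ ((gr M N q.1 + gr M N q.2) * gr M N q.1) * θ (bar M N q.1))
        • F (bar M N q.1) q.2 := by
  rw [vecMul, dotProduct, Fintype.sum_eq_single (q.1, bar M N q.1)]
  · simp [qRow, emb2, smul_smul]
  · rintro ⟨a, b⟩ hr
    by_cases ha : a = q.1
    · subst ha
      simp [qRow, show b ≠ bar M N q.1 from fun h => hr (by rw [h])]
    · simp [emb2, ha]

lemma emb1_mulVec_qCol_apply (p : V) :
    (emb1 M N F *ᵥ qCol M N A θ) p = ((-1) ^ gr M N p.2 * θ p.2) • F p.1 (bar M N p.2) := by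
  rw [mulVec, dotProduct, Fintype.sum_eq_single (bar M N p.2, p.2)]
  · simp [qCol, emb1]
  · rintro ⟨a, b⟩ hr
    by_cases hb : b = p.2
    · subst hb
      simp [qCol, ← eq_bar_iff, show a ≠ bar M N p.2 from fun h => hr (by rw [h])]
    · simp [emb1, Ne.symm hb]

lemma emb2_mulVec_qCol_apply (p : V) :
    (emb2 M N F *ᵥ qCol M N A θ) p =
      ((-1) ^ gr M N p.1 * θ (bar M N p.1) * (-1) ^ ((gr M N p.2 + gr M N p.1) * gr M N p.1))
        • F p.2 (bar M N p.1) := by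
  rw [mulVec, dotProduct, Fintype.sum_eq_single (p.1, bar M N p.1)]
  · simp [qCol, emb2, smul_smul]
  · rintro ⟨a, b⟩ hr
    by_cases ha : a = p.1
    · subst ha
      simp [qCol, show b ≠ bar M N p.1 from fun h => hr (by rw [h])]
    · simp [emb2, Ne.symm ha]

lemma PmatA_mul_emb2 : PmatA M N A * emb2 M N F = emb1 M N F * PmatA M N A := by
  ext p q
  rw [PmatA_mul_apply, mul_PmatA_apply]
  by_cases h : p.2 = q.1
  · simp only [emb1, emb2, h, if_true, smul_smul]
    congr 1
    rw [← pow_add]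
    exact neg_one_pow_congr (by simp only [Nat.even_add, Nat.even_mul]; tauto)
  · simp [emb1, emb2, h]

variable {θ F}

lemma apply_eq_neg_smul_of_stranspA_eq_neg (hFt : stranspA M N θ F = -F) (a b : Fin (M + N)) :
    F a b = -(((-1 : ℂ) ^ (gr M N b * (gr M N a + 1)) * θ (bar M N b) * θ (bar M N a))
      • F (bar M N b) (bar M N a)) := by
  have h := congrFun₂ hFt a b
  simp only [stranspA, gr_bar, Matrix.neg_apply] at h
  rw [h, neg_neg]

lemma qRow_vecMul_emb2_eq_neg (hθ : ∀ a, θ a ^ 2 = 1) (hFt : stranspA M N θ F = -F) :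
    qRow M N A θ ᵥ* emb2 M N F = -(qRow M N A θ ᵥ* emb1 M N F) := by
  ext q
  rw [Pi.neg_apply, qRow_vecMul_emb2_apply, qRow_vecMul_emb1_apply,
    apply_eq_neg_smul_of_stranspA_eq_neg hFt (bar M N q.2), smul_neg, neg_neg, smul_smul,
    bar_bar, gr_bar, neg_one_pow_add_mul_self]
  congr 1
  linear_combination (-(-1 : ℂ) ^ (gr M N q.1 * (gr M N q.2 + 1)) * θ (bar M N q.1)) * hθ q.2

lemma emb1_mulVec_qCol_eq_neg (hθ : ∀ a, θ a ^ 2 = 1) {θ₀ : ℂ}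
    (hθ₀ : ∀ a, (-1 : ℂ) ^ gr M N a * θ a * θ (bar M N a) = θ₀) (hFt : stranspA M N θ F = -F) :
    emb1 M N F *ᵥ qCol M N A θ = -(emb2 M N F *ᵥ qCol M N A θ) := by
  ext p
  rw [Pi.neg_apply, emb1_mulVec_qCol_apply, emb2_mulVec_qCol_apply,
    apply_eq_neg_smul_of_stranspA_eq_neg hFt p.2, smul_neg, neg_neg, smul_smul,
    bar_bar, gr_bar, add_comm (gr M N p.2), neg_one_pow_add_mul_self]
  congr 1
  linear_combination (-(-1 : ℂ) ^ gr M N p.2 * θ p.2) * hθ (bar M N p.2)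
    + θ (bar M N p.2) * hθ₀ p.2 - θ (bar M N p.2) * hθ₀ p.1
    - (-1 : ℂ) ^ gr M N p.1 * θ p.1 * θ (bar M N p.1) * θ (bar M N p.2)
      * neg_one_pow_sq (R := ℂ) (gr M N p.1 * (gr M N p.2 + 1))

lemma QmatA_mul_emb2 (hθ : ∀ a, θ a ^ 2 = 1) (hFt : stranspA M N θ F = -F) :
    QmatA M N A θ * emb2 M N F = -(QmatA M N A θ * emb1 M N F) := by
  rw [QmatA_eq_vecMulVec, vecMulVec_mul, vecMulVec_mul, qRow_vecMul_emb2_eq_neg hθ hFt,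
    vecMulVec_neg]

lemma emb1_mul_QmatA (hθ : ∀ a, θ a ^ 2 = 1) {θ₀ : ℂ}
    (hθ₀ : ∀ a, (-1 : ℂ) ^ gr M N a * θ a * θ (bar M N a) = θ₀) (hFt : stranspA M N θ F = -F) :
    emb1 M N F * QmatA M N A θ = -(emb2 M N F * QmatA M N A θ) := by
  rw [QmatA_eq_vecMulVec, mul_vecMulVec, mul_vecMulVec, emb1_mulVec_qCol_eq_neg hθ hθ₀ hFt,
    neg_vecMulVec]

end Products

theorem osp_intertwining_general (M n : ℕ) (A : Type*) [Ring A] [Algebra ℂ A]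
    (θ : Fin (M + 2 * n) → ℂ) (θ₀ : ℂ)
    (hθ : ∀ a, θ a = 1 ∨ θ a = -1)
    (hθ₀ : ∀ a, (-1 : ℂ) ^ (gr M (2 * n) a) * θ a * θ (bar M (2 * n) a) = θ₀)
    (F : Matrix (Fin (M + 2 * n)) (Fin (M + 2 * n)) A)
    (hFt : stranspA M (2 * n) θ F = -F) :
    PmatA M (2 * n) A * emb2 M (2 * n) F = emb1 M (2 * n) F * PmatA M (2 * n) A
      ∧ QmatA M (2 * n) A θ * emb2 M (2 * n) F = -(QmatA M (2 * n) A θ * emb1 M (2 * n) F)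
      ∧ emb1 M (2 * n) F * QmatA M (2 * n) A θ = -(emb2 M (2 * n) F * QmatA M (2 * n) A θ) := by
  have hθ_sq : ∀ a, θ a ^ 2 = 1 := fun a => by rcases hθ a with h | h <;> simp [h]
  exact ⟨PmatA_mul_emb2 F, QmatA_mul_emb2 hθ_sq hFt, emb1_mul_QmatA hθ_sq hθ₀ hFt⟩

/-- for an even matrix `F` with `F^t = −F` satisfying the
`osp(M|2n)` relation `[F₁,F₂} = P₁₂F₂ − F₂P₁₂ + F₂Q₁₂ − Q₁₂F₂`, the intertwining
relations `P₁₂F₂ = F₁P₁₂`, `Q₁₂F₂ = −Q₁₂F₁` and `F₁Q₁₂ = −F₂Q₁₂` hold. -/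
theorem osp_intertwining (M n : ℕ) (A : Type*) [Ring A] [Algebra ℂ A]
    (θ : Fin (M + 2 * n) → ℂ) (θ₀ : ℂ)
    (hθ : ∀ a, θ a = 1 ∨ θ a = -1)
    (hθ₀ : ∀ a, (-1 : ℂ) ^ (gr M (2 * n) a) * θ a * θ (bar M (2 * n) a) = θ₀)
    (F : Matrix (Fin (M + 2 * n)) (Fin (M + 2 * n)) A)
    (hFeven : ∀ a b, (gr M (2 * n) a + gr M (2 * n) b) % 2 = 1 → F a b = 0)
    (hFt : stranspA M (2 * n) θ F = -F)
    (hosp : emb1 M (2 * n) F * emb2 M (2 * n) F - emb2 M (2 * n) F * emb1 M (2 * n) F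
      = PmatA M (2 * n) A * emb2 M (2 * n) F - emb2 M (2 * n) F * PmatA M (2 * n) A
        + emb2 M (2 * n) F * QmatA M (2 * n) A θ - QmatA M (2 * n) A θ * emb2 M (2 * n) F) :
    PmatA M (2 * n) A * emb2 M (2 * n) F = emb1 M (2 * n) F * PmatA M (2 * n) A
      ∧ QmatA M (2 * n) A θ * emb2 M (2 * n) F = -(QmatA M (2 * n) A θ * emb1 M (2 * n) F)
      ∧ emb1 M (2 * n) F * QmatA M (2 * n) A θ = -(emb2 M (2 * n) F * QmatA M (2 * n) A θ) :=
  osp_intertwining_general M n A θ θ₀ hθ hθ₀ F hFt
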